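/- The 4×4 matrix r_ξ(λ) = (1/λ)(h⊗h + 2(X⁺⊗X⁻ + X⁻⊗X⁺)) + ξ(h⊗X⁺ − X⁺⊗h), written in the fundamental representation of sl₂, satisfies the classical Yang–Baxter equation [r₁₂(λ−μ), r₁₃(λ−ν) + r₂₃(μ−ν)] + [r₁₃(λ−ν), r₂₃(μ−ν)] = 0, where the subscripts indicate the factors of C²⊗C²⊗C² on which the matrix acts. -/
import Mathlib


open Matrix Kronecker

noncomputable section

/-- standard sl₂ generators in the fundamental representation -/
def sl2h : Matrix (Fin 2) (Fin 2) ℂ := !![1, 0; 0, -1]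
def sl2Xp : Matrix (Fin 2) (Fin 2) ℂ := !![0, 1; 0, 0]
def sl2Xm : Matrix (Fin 2) (Fin 2) ℂ := !![0, 0; 1, 0]

/-- the twisted classical r-matrix r_ξ(λ) on ℂ²⊗ℂ² -/
def rXi (ξ lam : ℂ) : Matrix (Fin 2 × Fin 2) (Fin 2 × Fin 2) ℂ :=
  lam⁻¹ • (sl2h ⊗ₖ sl2h + (2 : ℂ) • (sl2Xp ⊗ₖ sl2Xm + sl2Xm ⊗ₖ sl2Xp))
    + ξ • (sl2h ⊗ₖ sl2Xp - sl2Xp ⊗ₖ sl2h)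

/-- embedding of a matrix on ℂ²⊗ℂ² into factors 1,2 of ℂ²⊗ℂ²⊗ℂ² -/
def emb12 (r : Matrix (Fin 2 × Fin 2) (Fin 2 × Fin 2) ℂ) :
    Matrix (Fin 2 × Fin 2 × Fin 2) (Fin 2 × Fin 2 × Fin 2) ℂ :=
  fun x y => r (x.1, x.2.1) (y.1, y.2.1) * (if x.2.2 = y.2.2 then 1 else 0)

/-- embedding into factors 1,3 -/
def emb13 (r : Matrix (Fin 2 × Fin 2) (Fin 2 × Fin 2) ℂ) :
    Matrix (Fin 2 × Fin 2 × Fin 2) (Fin 2 × Fin 2 × Fin 2) ℂ :=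
  fun x y => r (x.1, x.2.2) (y.1, y.2.2) * (if x.2.1 = y.2.1 then 1 else 0)

/-- embedding into factors 2,3 -/
def emb23 (r : Matrix (Fin 2 × Fin 2) (Fin 2 × Fin 2) ℂ) :
    Matrix (Fin 2 × Fin 2 × Fin 2) (Fin 2 × Fin 2 × Fin 2) ℂ :=
  fun x y => r (x.2.1, x.2.2) (y.2.1, y.2.2) * (if x.1 = y.1 then 1 else 0)


private def Efun (ξ a : ℂ) : Fin 2 → Fin 2 → Fin 2 → Fin 2 → ℂ :=
  ![![![![a, ξ], ![-ξ, 0]],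
     ![![0, -a], ![2*a, ξ]]],
   ![![![0, 2*a], ![-a, -ξ]],
     ![![0, 0], ![0, a]]]]

private lemma rXi_eq (ξ l : ℂ) (i j k m : Fin 2) :
    rXi ξ l (i, j) (k, m) = Efun ξ l⁻¹ i j k m := by
  fin_cases i <;> fin_cases j <;> fin_cases k <;> fin_cases m <;>
    simp [rXi, Efun, sl2h, sl2Xp, sl2Xm, Matrix.kroneckerMap_apply] <;> ring

set_option maxHeartbeats 4000000
/-- the twisted r-matrix satisfies the classical Yang–Baxter equation. -/
theorem rXi_classical_yang_baxter (ξ lam mu nu : ℂ)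
    (hlam : lam ≠ 0) (hmu : mu ≠ 0) (hnu : nu ≠ 0)
    (h12 : lam ≠ mu) (h13 : lam ≠ nu) (h23 : mu ≠ nu) :
    (emb12 (rXi ξ (lam - mu)) * (emb13 (rXi ξ (lam - nu)) + emb23 (rXi ξ (mu - nu)))
        - (emb13 (rXi ξ (lam - nu)) + emb23 (rXi ξ (mu - nu))) * emb12 (rXi ξ (lam - mu)))
      + (emb13 (rXi ξ (lam - nu)) * emb23 (rXi ξ (mu - nu))
        - emb23 (rXi ξ (mu - nu)) * emb13 (rXi ξ (lam - nu))) = 0 := by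
  have ha := sub_ne_zero.mpr h12
  have hb := sub_ne_zero.mpr h13
  have hc := sub_ne_zero.mpr h23
  ext ⟨a, b, c⟩ ⟨d, e, f⟩
  fin_cases a <;> fin_cases b <;> fin_cases c <;> fin_cases d <;> fin_cases e <;> fin_cases f
  all_goals simp only [Fin.zero_eta, Fin.mk_one, Fin.isValue, Matrix.add_apply,
    Matrix.sub_apply, Matrix.mul_apply, Matrix.zero_apply, Fintype.sum_prod_type,
    Fin.sum_univ_two, emb12, emb13, emb23, rXi_eq, Efun, Matrix.cons_val_zero,
    Matrix.cons_val_one, Matrix.head_cons]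
  all_goals norm_num
  all_goals try field_simp
  all_goals try ring1
  all_goals (rw [div_add' _ _ _ (by simp [ha, hb, hc, sub_eq_zero]; try tauto),
    div_eq_zero_iff]; left; ring1)
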